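/- For the truncated Poisson distribution q^{0.95}(λ) (Poisson(λ) truncated at its 0.95-quantile and renormalized), the maximal support point m(q^{0.95}(λ)) satisfies λ - ln 2 ≤ m(q^{0.95}(λ)) ≤ 1.3λ + 5 for all λ > 0. -/

import Mathlib

noncomputable def poissonPMF (r : ℝ) (k : ℕ) : ℝ :=
  Real.exp (-r) * r ^ k / (Nat.factorial k)

noncomputable def poissonCDF (r : ℝ) (m : ℕ) : ℝ :=
  ∑ k ∈ Finset.range (m + 1), poissonPMF r k

/-!
Every Poisson weight is positive, so `m(q^{0.95}(λ))` is the `0.95`-quantile `M` of `Poisson(λ)`,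
the least `m` with `P(X ≤ m) ≥ 0.95`.

Lower bound: if `m + 1/2 ≤ λ`, the weight at `m - j` is at most `e` times the weight at `m + 1 + j`,
because their ratio is `(m + 1 + j)! / ((m - j)! λ^(2j+1)) ≤ ((m + 1) / λ)^(2j+1)
≤ (1 + 1/(2m+1))^(2m+1) ≤ e`. Hence `P(X ≤ m) ≤ e / (1 + e) < 0.95`, and `ln 2 > 1/2` gives
`M ≥ λ - ln 2`.

Upper bound: the tail `∑_{k ≥ n} λ^k/k!` is at most `λ^n/n! · (n+1)/(n+1-λ)` (compare with a
geometric series), and `P(X ≤ m) ≥ 0.95` as soon as this bound for `n = m + 1` is at most `1/19`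
of the head `∑_{k ≤ m} λ^k/k!`. For `λ ≥ 100` and `m = ⌊1.3 λ + 5⌋` this follows from the
Chernoff-type estimate `λ^n/n! ≤ exp (λ e^{1/4} - n/4)`. For `λ ≤ 100` we use that the ratio of the
tail bound to the head increases with `λ`: an exact rational check at finitely many points `b`
covers each interval between consecutive ones.
-/

open Finset Real
open scoped Nat

theorem Real.exp_le_expNear_of_lt {x : ℝ} {n : ℕ} (hx : 0 ≤ x) (hxn : x < n + 1) :
    exp x ≤ expNear n x ((n + 1) / (n + 1 - x)) := by
  have hn : (0 : ℝ) < n + 1 := by positivity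
  have hr : x / (n + 1) < 1 := (div_lt_one hn).2 hxn
  have htail : HasSum (fun j ↦ x ^ (j + n) / (j + n)!) (exp x - ∑ k ∈ range n, x ^ k / k !) :=
    (hasSum_nat_add_iff' n).2 (exp_eq_exp_ℝ ▸ NormedSpace.expSeries_div_hasSum_exp x)
  have hgeom : HasSum (fun j ↦ x ^ n / n ! * (x / (n + 1)) ^ j)
      (x ^ n / n ! * ((n + 1) / (n + 1 - x))) := by
    have := (hasSum_geometric_of_lt_one (by positivity) hr).mul_left (x ^ n / n !)
    rwa [one_sub_div hn.ne', inv_div] at this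
  have hterm (j : ℕ) : x ^ (j + n) / (j + n)! ≤ x ^ n / n ! * (x / (n + 1)) ^ j := by
    have hfac : (n ! * (n + 1) ^ j : ℝ) ≤ (j + n)! := by
      rw [add_comm j n]; exact_mod_cast Nat.factorial_mul_pow_le_factorial
    calc x ^ (j + n) / (j + n)! ≤ x ^ (j + n) / (n ! * (n + 1) ^ j) :=
          div_le_div_of_nonneg_left (by positivity) (by positivity) hfac
      _ = x ^ n / n ! * (x / (n + 1)) ^ j := by rw [div_pow, pow_add]; field_simp
  have := hasSum_le hterm htail hgeom
  rw [expNear]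
  linarith

theorem poissonCDF_eq (r : ℝ) (m : ℕ) :
    poissonCDF r m = exp (-r) * ∑ k ∈ range (m + 1), r ^ k / k ! := by
  simp only [poissonCDF, poissonPMF, mul_sum, mul_div_assoc]

theorem poissonPMF_pos {r : ℝ} (hr : 0 < r) (k : ℕ) : 0 < poissonPMF r k := by
  unfold poissonPMF; positivity

theorem Nat.factorial_add_le_factorial_sub_mul_pow {m j : ℕ} (hj : j ≤ m) :
    (m + 1 + j)! ≤ (m - j)! * (m + 1) ^ (2 * j + 1) := by
  induction j with
  | zero => simp [Nat.factorial_succ, mul_comm]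
  | succ j ih =>
    obtain ⟨d, rfl⟩ : ∃ d, m = d + j + 1 := ⟨m - j - 1, by omega⟩
    have ih := ih (by omega)
    rw [show d + j + 1 - j = d + 1 by omega, Nat.factorial_succ] at ih
    rw [show d + j + 1 + 1 + (j + 1) = d + j + 1 + 1 + j + 1 by omega, Nat.factorial_succ,
      show d + j + 1 - (j + 1) = d by omega, show 2 * (j + 1) + 1 = 2 * j + 1 + 2 by omega, pow_add]
    -- `(a + b)(a - b) ≤ a²` with `a = d + j + 2`, `b = j + 1`
    have hpair : (d + j + 1 + 1 + j + 1) * (d + 1) ≤ (d + j + 1 + 1) ^ 2 := by nlinarith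
    calc (d + j + 1 + 1 + j + 1) * (d + j + 1 + 1 + j)!
        ≤ (d + j + 1 + 1 + j + 1) * ((d + 1) * d ! * (d + j + 1 + 1) ^ (2 * j + 1)) :=
          Nat.mul_le_mul_left _ ih
      _ = (d + j + 1 + 1 + j + 1) * (d + 1) * (d ! * (d + j + 1 + 1) ^ (2 * j + 1)) := by ring
      _ ≤ (d + j + 1 + 1) ^ 2 * (d ! * (d + j + 1 + 1) ^ (2 * j + 1)) :=
          Nat.mul_le_mul_right _ hpair
      _ = _ := by ring

theorem Real.pow_le_exp_one_mul_pow {m j : ℕ} {x : ℝ} (hx : m + 1 / 2 ≤ x) (hj : j ≤ m) :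
    ((m : ℝ) + 1) ^ (2 * j + 1) ≤ exp 1 * x ^ (2 * j + 1) := by
  have hx0 : 0 < x := by linarith [(Nat.cast_nonneg m : (0 : ℝ) ≤ m)]
  rcases le_or_gt ((m : ℝ) + 1) x with hle | hlt
  · calc ((m : ℝ) + 1) ^ (2 * j + 1) ≤ x ^ (2 * j + 1) := by gcongr
      _ ≤ exp 1 * x ^ (2 * j + 1) := le_mul_of_one_le_left (by positivity) (one_le_exp zero_le_one)
  · have hr1 : 1 ≤ (m + 1) / x := (one_le_div hx0).2 hlt.le
    have hr : (m + 1) / x ≤ 1 + ((2 * m + 1 : ℕ) : ℝ)⁻¹ := by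
      rw [div_le_iff₀ hx0]; push_cast
      field_simp
      nlinarith
    calc ((m : ℝ) + 1) ^ (2 * j + 1) = ((m + 1) / x) ^ (2 * j + 1) * x ^ (2 * j + 1) := by
          rw [div_pow, div_mul_cancel₀ _ (by positivity)]
      _ ≤ ((m + 1) / x) ^ (2 * m + 1) * x ^ (2 * j + 1) := by gcongr
      _ ≤ (1 + ((2 * m + 1 : ℕ) : ℝ)⁻¹) ^ (2 * m + 1) * x ^ (2 * j + 1) := by gcongr
      _ ≤ exp 1 * x ^ (2 * j + 1) := by gcongr; exact one_add_inv_pow_le_exp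

theorem poissonCDF_le_of_add_half_le {lam : ℝ} {m : ℕ} (h : m + 1 / 2 ≤ lam) :
    poissonCDF lam m ≤ exp 1 / (1 + exp 1) := by
  have hlam : 0 < lam := by linarith [(Nat.cast_nonneg m : (0 : ℝ) ≤ m)]
  set f : ℕ → ℝ := fun k ↦ lam ^ k / (k ! : ℝ)
  have hpair (j : ℕ) (hj : j ∈ range (m + 1)) : f (m - j) ≤ exp 1 * f (m + 1 + j) := by
    have hjm : j ≤ m := Nat.lt_succ_iff.1 (mem_range.1 hj)
    have hfac : ((m + 1 + j)! : ℝ) ≤ (m - j)! * (m + 1) ^ (2 * j + 1) := by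
      exact_mod_cast Nat.factorial_add_le_factorial_sub_mul_pow hjm
    simp only [f]
    rw [mul_div_assoc', div_le_div_iff₀ (by positivity) (by positivity)]
    calc lam ^ (m - j) * ((m + 1 + j)! : ℝ)
        ≤ lam ^ (m - j) * ((m - j)! * (m + 1) ^ (2 * j + 1)) := by gcongr
      _ ≤ lam ^ (m - j) * ((m - j)! * (exp 1 * lam ^ (2 * j + 1))) := by
          gcongr; exact pow_le_exp_one_mul_pow h hjm
      _ = exp 1 * (lam ^ (m - j) * lam ^ (2 * j + 1)) * (m - j)! := by ring
      _ = exp 1 * lam ^ (m + 1 + j) * (m - j)! := by rw [← pow_add]; congr 3; omega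
  have hhead : ∑ k ∈ range (m + 1), f k ≤ exp 1 * ∑ j ∈ range (m + 1), f (m + 1 + j) := by
    rw [← sum_range_reflect, mul_sum]
    exact sum_le_sum fun j hj ↦ by simpa using hpair j hj
  have hexp : ∑ k ∈ range (m + 1), f k + ∑ j ∈ range (m + 1), f (m + 1 + j) ≤ exp lam := by
    rw [← sum_range_add]; exact sum_le_exp_of_nonneg hlam.le _
  have hkey : (∑ k ∈ range (m + 1), f k) * (1 + exp 1) ≤ exp 1 * exp lam := by
    linarith [mul_le_mul_of_nonneg_left hexp (exp_pos 1).le]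
  rw [poissonCDF_eq, exp_neg, inv_mul_eq_div, div_le_div_iff₀ (exp_pos lam) (by positivity)]
  exact hkey

def IsTailDominated {K : Type*} [Field K] [LinearOrder K] (x : K) (n : ℕ) : Prop :=
  x < n + 1 ∧ 19 * (x ^ n / n ! * ((n + 1) / (n + 1 - x))) ≤ ∑ k ∈ range n, x ^ k / k !

instance (x : ℚ) (n : ℕ) : Decidable (IsTailDominated x n) :=
  inferInstanceAs (Decidable (_ ∧ _))

theorem IsTailDominated.ratCast {x : ℚ} {n : ℕ} (h : IsTailDominated x n) :
    IsTailDominated (x : ℝ) n := by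
  obtain ⟨hlt, hle⟩ := h
  exact ⟨by exact_mod_cast hlt, by exact_mod_cast hle⟩

theorem IsTailDominated.mono {b x : ℝ} {n : ℕ} (h : IsTailDominated b n) (hx : 0 < x)
    (hxb : x ≤ b) : IsTailDominated x n := by
  obtain ⟨hbn, hdom⟩ := h
  have hb : 0 < b := hx.trans_le hxb
  refine ⟨hxb.trans_lt hbn, ?_⟩
  have hratio : (n + 1) / (n + 1 - x) ≤ (n + 1) / (n + 1 - b) := by
    gcongr
  have hhead : x ^ n * ∑ k ∈ range n, b ^ k / k ! ≤ b ^ n * ∑ k ∈ range n, x ^ k / k ! := by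
    rw [mul_sum, mul_sum]
    refine sum_le_sum fun k hk ↦ ?_
    have hsplit (y : ℝ) : y ^ n = y ^ (n - k) * y ^ k := by
      rw [← pow_add, Nat.sub_add_cancel (mem_range.1 hk).le]
    rw [mul_div_assoc', mul_div_assoc', hsplit x, hsplit b]
    gcongr ?_ / _
    calc x ^ (n - k) * x ^ k * b ^ k = x ^ (n - k) * (x ^ k * b ^ k) := by ring
      _ ≤ b ^ (n - k) * (x ^ k * b ^ k) := by gcongr
      _ = _ := by ring
  refine le_of_mul_le_mul_left ?_ (pow_pos hb n)
  calc b ^ n * (19 * (x ^ n / n ! * ((n + 1) / (n + 1 - x))))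
      = 19 * (x ^ n * b ^ n / n !) * ((n + 1) / (n + 1 - x)) := by ring
    _ ≤ 19 * (x ^ n * b ^ n / n !) * ((n + 1) / (n + 1 - b)) := by gcongr
    _ = x ^ n * (19 * (b ^ n / n ! * ((n + 1) / (n + 1 - b)))) := by ring
    _ ≤ x ^ n * ∑ k ∈ range n, b ^ k / k ! := by gcongr
    _ ≤ b ^ n * ∑ k ∈ range n, x ^ k / k ! := hhead

theorem le_poissonCDF_of_isTailDominated {lam : ℝ} {m : ℕ} (hlam : 0 ≤ lam)
    (h : IsTailDominated lam (m + 1)) : 19 / 20 ≤ poissonCDF lam m := by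
  obtain ⟨hlt, hdom⟩ := h
  have hexp := exp_le_expNear_of_lt hlam hlt
  rw [expNear] at hexp
  rw [poissonCDF_eq, exp_neg, inv_mul_eq_div, le_div_iff₀ (exp_pos lam)]
  push_cast at hdom hexp
  linarith

theorem Real.pow_div_factorial_le_exp_mul_exp_sub {x : ℝ} (hx : 0 ≤ x) (n : ℕ) (t : ℝ) :
    x ^ n / n ! ≤ exp (x * exp t - t * n) := by
  have h := pow_div_factorial_le_exp (x * exp t) (by positivity) n
  rw [mul_pow, ← exp_nat_mul, mul_comm (n : ℝ)] at h
  rw [exp_sub, le_div_iff₀ (exp_pos _)]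
  calc x ^ n / n ! * exp (t * n) = x ^ n * exp (t * n) / n ! := by ring
    _ ≤ exp (x * exp t) := h

theorem isTailDominated_of_hundred_le {lam : ℝ} {n : ℕ} (hlam : 100 ≤ lam)
    (hn : 1.3 * lam + 5 ≤ n) : IsTailDominated lam n := by
  have hquarter : exp (1 / 4) ≤ 1.285 := by
    refine le_of_pow_le_pow_left₀ (n := 4) (by norm_num) (by norm_num) ?_
    rw [← exp_nat_mul]
    norm_num
    linarith [exp_one_lt_d9]
  have hfive : 260 / 3 ≤ exp 5 := by
    have : (2.7 : ℝ) ^ 5 ≤ exp 1 ^ 5 := by gcongr; linarith [exp_one_gt_d9]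
    rw [← exp_nat_mul] at this
    norm_num at this
    linarith
  have hterm : lam ^ n / n ! ≤ exp lam / exp 5 := by
    calc lam ^ n / n ! ≤ exp (lam * exp (1 / 4) - 1 / 4 * n) :=
          pow_div_factorial_le_exp_mul_exp_sub (by positivity) n _
      _ ≤ exp (lam - 5) := exp_le_exp.2 (by nlinarith)
      _ = exp lam / exp 5 := exp_sub _ _
  have hratio : ((n : ℝ) + 1) / (n + 1 - lam) ≤ 13 / 3 := by
    rw [div_le_div_iff₀ (by linarith) (by norm_num)]; linarith
  have htail : lam ^ n / n ! * ((n + 1) / (n + 1 - lam)) ≤ exp lam / 20 := by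
    calc lam ^ n / n ! * ((n + 1) / (n + 1 - lam)) ≤ exp lam / exp 5 * (13 / 3) :=
          mul_le_mul hterm hratio (div_nonneg (by positivity) (by linarith)) (by positivity)
      _ ≤ exp lam / (260 / 3) * (13 / 3) := by gcongr
      _ = exp lam / 20 := by ring
  have hlt : lam < n + 1 := by linarith
  have hexp := exp_le_expNear_of_lt (by positivity) hlt
  rw [expNear] at hexp
  exact ⟨hlt, by linarith⟩

def IsQuantileCover (c : ℚ) : ℚ → List (ℚ × ℕ) → Prop
  | a, [] => c ≤ a
  | a, (b, m) :: L => (m : ℚ) ≤ 1.3 * a + 5 ∧ IsTailDominated b (m + 1) ∧ IsQuantileCover c b L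

instance IsQuantileCover.decidable (c : ℚ) : (a : ℚ) → (L : List (ℚ × ℕ)) →
    Decidable (IsQuantileCover c a L)
  | a, [] => inferInstanceAs (Decidable (c ≤ a))
  | _, (b, _) :: L =>
    have := IsQuantileCover.decidable c b L
    inferInstanceAs (Decidable (_ ∧ _ ∧ _))

theorem IsQuantileCover.exists_isTailDominated {c a : ℚ} {L : List (ℚ × ℕ)}
    (h : IsQuantileCover c a L) {lam : ℝ} (hlam : 0 < lam) (ha : a < lam) (hc : lam ≤ c) :
    ∃ m : ℕ, (m : ℝ) ≤ 1.3 * lam + 5 ∧ IsTailDominated lam (m + 1) := by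
  induction L generalizing a with
  | nil =>
    have : (c : ℝ) ≤ a := by exact_mod_cast (h : c ≤ a)
    linarith
  | cons bracket L ih =>
    obtain ⟨b, m⟩ := bracket
    obtain ⟨hm, hb, hL⟩ := h
    by_cases hlb : lam ≤ b
    · have hm' : (m : ℝ) ≤ 1.3 * a + 5 := by simpa using Rat.cast_le (K := ℝ).2 hm
      exact ⟨m, by linarith, hb.ratCast.mono hlam hlb⟩
    · exact ih hL (not_le.1 hlb)

-- In each bracket `(b, m)`, `m = ⌊1.3 a + 5⌋` for the previous endpoint `a`, and `b` is the largest
-- multiple of `1 / 4` with `IsTailDominated b (m + 1)`.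
def quantileBrackets : List (ℚ × ℕ) :=
  [(5/2, 5), (9/2, 8), (6, 10), (15/2, 12), (9, 14), (21/2, 16), (49/4, 18), (55/4, 20),
   (31/2, 22), (18, 25), (41/2, 28), (23, 31), (51/2, 34), (29, 38), (65/2, 42), (147/4, 47),
   (165/4, 52), (93/2, 58), (211/4, 65), (239/4, 73), (68, 82), (78, 93), (359/4, 106),
   (207/2, 121)]

theorem isQuantileCover_quantileBrackets : IsQuantileCover 100 0 quantileBrackets := by
  decide +kernel

theorem exists_isTailDominated {lam : ℝ} (hlam : 0 < lam) :
    ∃ m : ℕ, (m : ℝ) ≤ 1.3 * lam + 5 ∧ IsTailDominated lam (m + 1) := by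
  rcases le_or_gt lam 100 with hle | hgt
  · exact isQuantileCover_quantileBrackets.exists_isTailDominated hlam (by simpa using hlam)
      (by simpa using hle)
  · refine ⟨⌊1.3 * lam + 5⌋₊, Nat.floor_le (by positivity),
      isTailDominated_of_hundred_le hgt.le ?_⟩
    push_cast
    exact (Nat.lt_floor_add_one _).le

/-- Bounds on the maximal support point of the truncated Poisson `q^{0.95}(λ)`:
`λ - ln 2 ≤ m(q^{0.95}(λ)) ≤ 1.3 λ + 5` for all `λ > 0`. -/
theorem truncated_poisson_support_bounds (lam : ℝ) (hlam : 0 < lam) :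
    lam - Real.log 2
      ≤ ((sSup {k : ℕ | poissonPMF lam k > 0 ∧
            k ≤ sInf {m : ℕ | (0.95 : ℝ) ≤ poissonCDF lam m}} : ℕ) : ℝ)
    ∧ ((sSup {k : ℕ | poissonPMF lam k > 0 ∧
            k ≤ sInf {m : ℕ | (0.95 : ℝ) ≤ poissonCDF lam m}} : ℕ) : ℝ)
        ≤ 1.3 * lam + 5 := by
  obtain ⟨m₀, hm₀, hdom⟩ := exists_isTailDominated hlam
  have hm₀S : (0.95 : ℝ) ≤ poissonCDF lam m₀ := by
    linarith [le_poissonCDF_of_isTailDominated hlam.le hdom]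
  set M := sInf {m : ℕ | (0.95 : ℝ) ≤ poissonCDF lam m}
  have hsupport : {k : ℕ | poissonPMF lam k > 0 ∧ k ≤ M} = Set.Iic M :=
    Set.ext fun k ↦ and_iff_right (poissonPMF_pos hlam k)
  rw [hsupport, csSup_Iic]
  refine ⟨?_, (Nat.cast_le.2 (Nat.sInf_le hm₀S)).trans hm₀⟩
  by_contra! hM
  have hMS : (0.95 : ℝ) ≤ poissonCDF lam M :=
    Nat.sInf_mem (s := {m : ℕ | (0.95 : ℝ) ≤ poissonCDF lam m}) ⟨m₀, hm₀S⟩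
  have hcdf := poissonCDF_le_of_add_half_le (lam := lam) (m := M) (by linarith [log_two_gt_d9])
  have hlt : exp 1 / (1 + exp 1) < 0.95 := by
    rw [div_lt_iff₀ (by positivity)]; linarith [exp_one_lt_d9]
  linarith
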